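/- arXiv:2603.18870 — 4 statements merged into one kernel-verified Lean document; each statement's English description precedes it below -/
import Mathlib

section
/- Let $(w_i)_{i=1}^n$ be real weights and $(X_i)_{i=1}^n$ real numbers, and let $\mu$ be a real function such that on each of $[0,\infty)$ and $(-\infty,0)$ it is twice differentiable with second derivative bounded in absolute value by $M$. Define $\tau = \mu(0^+)-\mu(0^-)$ (the jump of $\mu$ at $0$, where $\mu(0^+)=\mu(0)$). If the weights satisfy the local-linear exactness conditions $\sum_{i: X_i\ge 0} w_i = 1$, $\sum_{i: X_i<0} w_i = -1$, $\sum_{i: X_i\ge 0} w_i X_i = 0$, $\sum_{i: X_i<0} w_i X_i = 0$, then $\big|\sum_{i=1}^n w_i \mu(X_i) - \tau\big| \le \frac{M}{2}\sum_{i=1}^n |w_i| X_i^2$. -/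
/-!
On each side of the cutoff, the exactness conditions make the weights reproduce the affine part
`f 0 + f' 0 * x` of the branch `f`, so the bias is the weighted sum of first-order Taylor remainders
at `0`. Each remainder is at most `M x² / 2` in absolute value, because `t ↦ M t² / 2 ± f t` is
convex and therefore lies above its tangent line.
-/

open Finset

lemma ConvexOn.add_deriv_mul_sub_le {S : Set ℝ} {f : ℝ → ℝ} {a x : ℝ} (hfc : ConvexOn ℝ S f)
    (ha : a ∈ S) (hx : x ∈ S) (hfd : DifferentiableAt ℝ f a) :
    f a + deriv f a * (x - a) ≤ f x := by
  rcases lt_trichotomy a x with hax | rfl | hxa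
  · have := hfc.deriv_le_slope ha hx hax hfd
    rw [slope_def_field, le_div_iff₀ (sub_pos.2 hax)] at this
    linarith
  · simp
  · have := hfc.slope_le_deriv hx ha hxa hfd
    rw [slope_def_field, div_le_iff₀ (sub_pos.2 hxa)] at this
    linarith

lemma neg_half_mul_sq_le_sub_sub_deriv_mul {f : ℝ → ℝ} {M : ℝ} (hf : Differentiable ℝ f)
    (hf' : Differentiable ℝ (deriv f)) (hb : ∀ x, -M ≤ deriv (deriv f) x) (a x : ℝ) :
    -(M / 2 * (x - a) ^ 2) ≤ f x - f a - deriv f a * (x - a) := by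
  set g := fun t => f t + M / 2 * t ^ 2
  have hg : ∀ t, HasDerivAt g (deriv f t + M * t) t := fun t =>
    ((hf t).hasDerivAt.add ((hasDerivAt_pow 2 t).const_mul (M / 2))).congr_deriv (by
      norm_num; ring)
  have hg' : deriv g = fun t => deriv f t + M * t := funext fun t => (hg t).deriv
  have hg'' : ∀ t, HasDerivAt (deriv g) (deriv (deriv f) t + M) t := fun t =>
    hg' ▸ ((hf' t).hasDerivAt.add ((hasDerivAt_id t).const_mul M)).congr_deriv (by rw [mul_one])
  have hconvex : ConvexOn ℝ Set.univ g :=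
    convexOn_univ_of_deriv2_nonneg (fun t => (hg t).differentiableAt)
      (fun t => (hg'' t).differentiableAt) fun t => by
        rw [Function.iterate_succ_apply, Function.iterate_one, (hg'' t).deriv]
        linarith [hb t]
  have := hconvex.add_deriv_mul_sub_le (Set.mem_univ a) (Set.mem_univ x)
    (hg a).differentiableAt
  rw [(hg a).deriv] at this
  simp only [g] at this
  nlinarith

lemma abs_sub_sub_deriv_mul_le {f : ℝ → ℝ} {M : ℝ} (hf : Differentiable ℝ f)
    (hf' : Differentiable ℝ (deriv f)) (hb : ∀ x, |deriv (deriv f) x| ≤ M) (a x : ℝ) :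
    |f x - f a - deriv f a * (x - a)| ≤ M / 2 * (x - a) ^ 2 := by
  have hneg : Differentiable ℝ (deriv (-f)) := by
    rw [deriv.neg']
    exact hf'.neg
  have lower := neg_half_mul_sq_le_sub_sub_deriv_mul hf hf' (fun x => neg_le_of_abs_le (hb x)) a x
  have upper := neg_half_mul_sq_le_sub_sub_deriv_mul hf.neg hneg
    (fun x => by simpa [deriv.neg'] using (le_abs_self _).trans (hb x)) a x
  simp only [Pi.neg_apply, deriv.neg'] at upper
  exact abs_le.2 ⟨lower, by linarith⟩

lemma abs_sum_mul_sub_mul_le {ι : Type*} (s : Finset ι) (w X : ι → ℝ) (c : ℝ) {f : ℝ → ℝ}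
    {M : ℝ} (hf : Differentiable ℝ f) (hf' : Differentiable ℝ (deriv f))
    (hb : ∀ x, |deriv (deriv f) x| ≤ M) (hw : ∑ i ∈ s, w i = c)
    (hwX : ∑ i ∈ s, w i * X i = 0) :
    |∑ i ∈ s, w i * f (X i) - c * f 0| ≤ M / 2 * ∑ i ∈ s, |w i| * X i ^ 2 := by
  have hremainder : ∑ i ∈ s, w i * f (X i) - c * f 0 =
      ∑ i ∈ s, w i * (f (X i) - f 0 - deriv f 0 * X i) := by
    simp only [mul_sub, sum_sub_distrib, ← hw, sum_mul, mul_left_comm _ (deriv f 0),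
      ← mul_sum, hwX, mul_zero, sub_zero]
  rw [hremainder, mul_sum]
  refine (abs_sum_le_sum_abs _ _).trans (sum_le_sum fun i _ => ?_)
  have htaylor := abs_sub_sub_deriv_mul_le hf hf' hb 0 (X i)
  rw [sub_zero] at htaylor
  rw [abs_mul, mul_left_comm]
  exact mul_le_mul_of_nonneg_left htaylor (abs_nonneg _)

/-- Worst-case conditional bias bound for a local-linear-type RD estimator over the
Hölder class of functions twice differentiable on each side of the cutoff with second
derivative bounded by `M`. -/
theorem stmt_0 (n : ℕ) (w X : Fin n → ℝ) (f0 f1 : ℝ → ℝ) (M : ℝ)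
    (hf1 : Differentiable ℝ f1) (hf1' : Differentiable ℝ (deriv f1))
    (hb1 : ∀ x, |deriv (deriv f1) x| ≤ M)
    (hf0 : Differentiable ℝ f0) (hf0' : Differentiable ℝ (deriv f0))
    (hb0 : ∀ x, |deriv (deriv f0) x| ≤ M)
    (μ : ℝ → ℝ) (hμ : ∀ x, μ x = if 0 ≤ x then f1 x else f0 x)
    (h1 : ∑ i ∈ univ.filter (fun i => 0 ≤ X i), w i = 1)
    (h2 : ∑ i ∈ univ.filter (fun i => X i < 0), w i = -1)
    (h3 : ∑ i ∈ univ.filter (fun i => 0 ≤ X i), w i * X i = 0)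
    (h4 : ∑ i ∈ univ.filter (fun i => X i < 0), w i * X i = 0) :
    |∑ i, w i * μ (X i) - (f1 0 - f0 0)| ≤ M / 2 * ∑ i, |w i| * (X i) ^ 2 := by
  have hsplit (g : Fin n → ℝ) : ∑ i, g i =
      ∑ i ∈ univ.filter (fun i => 0 ≤ X i), g i + ∑ i ∈ univ.filter (fun i => X i < 0), g i := by
    simp_rw [← not_le, sum_filter_add_sum_filter_not]
  have hright : ∑ i ∈ univ.filter (fun i => 0 ≤ X i), w i * μ (X i) =
      ∑ i ∈ univ.filter (fun i => 0 ≤ X i), w i * f1 (X i) :=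
    sum_congr rfl fun i hi => by rw [hμ, if_pos (mem_filter.1 hi).2]
  have hleft : ∑ i ∈ univ.filter (fun i => X i < 0), w i * μ (X i) =
      ∑ i ∈ univ.filter (fun i => X i < 0), w i * f0 (X i) :=
    sum_congr rfl fun i hi => by rw [hμ, if_neg (not_le.2 (mem_filter.1 hi).2)]
  calc |∑ i, w i * μ (X i) - (f1 0 - f0 0)|
      = |(∑ i ∈ univ.filter (fun i => 0 ≤ X i), w i * f1 (X i) - 1 * f1 0) +
          (∑ i ∈ univ.filter (fun i => X i < 0), w i * f0 (X i) - -1 * f0 0)| := by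
        rw [hsplit, hright, hleft]
        ring_nf
    _ ≤ M / 2 * ∑ i ∈ univ.filter (fun i => 0 ≤ X i), |w i| * X i ^ 2 +
          M / 2 * ∑ i ∈ univ.filter (fun i => X i < 0), |w i| * X i ^ 2 :=
        (abs_add_le _ _).trans <| add_le_add
          (abs_sum_mul_sub_mul_le _ w X 1 hf1 hf1' hb1 h1 h3)
          (abs_sum_mul_sub_mul_le _ w X (-1) hf0 hf0' hb0 h2 h4)
    _ = M / 2 * ∑ i, |w i| * (X i) ^ 2 := by rw [← mul_add, ← hsplit]
end

section
/- Let $\varepsilon_{gi}$, $\varepsilon_{gj}$ be random variables in a cluster $g$, and let $(\varepsilon_{g_1 i_1})_{(g_1,i_1) \in N^1}$ and $(\varepsilon_{g_2 j_2})_{(g_2,j_2) \in N^2}$ be random variables from two finite nonempty index sets $N^1, N^2$ such that: (a) the collection indexed by $N^1$, the collection indexed by $N^2$, and the pair $(\varepsilon_{gi}, \varepsilon_{gj})$ are mutually independent, and (b) all variables are square-integrable with $\mathbb{E}[\varepsilon_{g_1 i_1}] = 0$ for all $(g_1,i_1) \in N^1$ and $\mathbb{E}[\varepsilon_{g_2 j_2}]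 = 0$ for all $(g_2,j_2) \in N^2$. Define $\varepsilon^{\Delta_1}_{gi} = \varepsilon_{gi} - \frac{1}{|N^1|}\sum_{(g_1,i_1) \in N^1} \varepsilon_{g_1 i_1}$ and $\varepsilon^{\Delta_2}_{gj} = \varepsilon_{gj} - \frac{1}{|N^2|}\sum_{(g_2,j_2) \in N^2} \varepsilon_{g_2 j_2}$. Then $\mathbb{E}[\varepsilon^{\Delta_1}_{gi}\,\varepsilon^{\Delta_2}_{gj}] = \mathbb{E}[\varepsilon_{gi}\varepsilon_{gj}]$. -/
open MeasureTheory ProbabilityTheory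

/-! Expanding the product, each cross term factors by independence and vanishes because the
neighbour averages have mean zero; only `E[ε_gi ε_gj]` survives. -/

section

variable {Ω : Type*} [MeasurableSpace Ω] {P : Measure Ω}

theorem integral_sub_mul_sub_eq_of_indepFun {X Y A B : Ω → ℝ}
    (hX : Integrable X P) (hY : Integrable Y P) (hA : Integrable A P) (hB : Integrable B P)
    (hXY : Integrable (fun ω => X ω * Y ω) P)
    (hXB : IndepFun X B P) (hAY : IndepFun A Y P) (hAB : IndepFun A B P)
    (hA0 : ∫ ω, A ω ∂P = 0) (hB0 : ∫ ω, B ω ∂P = 0) :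
    ∫ ω, (X ω - A ω) * (Y ω - B ω) ∂P = ∫ ω, X ω * Y ω ∂P := by
  have hXB0 : ∫ ω, X ω * B ω ∂P = 0 := by
    simpa [hB0] using hXB.integral_mul_eq_mul_integral hX.1 hB.1
  have hAY0 : ∫ ω, A ω * Y ω ∂P = 0 := by
    simpa [hA0] using hAY.integral_mul_eq_mul_integral hA.1 hY.1
  have hAB0 : ∫ ω, A ω * B ω ∂P = 0 := by
    simpa [hA0] using hAB.integral_mul_eq_mul_integral hA.1 hB.1
  have hXBi : Integrable (fun ω => X ω * B ω) P := hXB.integrable_mul hX hB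
  have hAYi : Integrable (fun ω => A ω * Y ω) P := hAY.integrable_mul hA hY
  have hABi : Integrable (fun ω => A ω * B ω) P := hAB.integrable_mul hA hB
  calc ∫ ω, (X ω - A ω) * (Y ω - B ω) ∂P
      = ∫ ω, (X ω * Y ω - X ω * B ω - A ω * Y ω + A ω * B ω) ∂P := by
        congr 1 with ω
        ring
    _ = ∫ ω, X ω * Y ω ∂P := by
        have h1 : Integrable (fun ω => X ω * Y ω - X ω * B ω) P := hXY.sub hXBi
        have h2 : Integrable (fun ω => X ω * Y ω - X ω * B ω - A ω * Y ω) P := h1.sub hAYi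
        rw [integral_add h2 hABi, integral_sub h1 hAYi, integral_sub hXY hXBi, hXB0, hAY0, hAB0]
        ring

theorem integral_sum_div_eq_zero {ι : Type*} [Fintype ι] {f : ι → Ω → ℝ}
    (hf : ∀ i, Integrable (f i) P) (hf0 : ∀ i, ∫ ω, f i ω ∂P = 0) (c : ℝ) :
    ∫ ω, (∑ i, f i ω) / c ∂P = 0 := by
  rw [integral_div, integral_finsetSum _ fun i _ => hf i]
  simp [hf0]

end

theorem measurable_sum_div {ι : Type*} [Fintype ι] (c : ℝ) :
    Measurable fun x : ι → ℝ => (∑ i, x i) / c :=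
  (Finset.measurable_sum _ fun i _ => measurable_pi_apply i).div_const c

theorem stmt_5_general {Ω : Type*} [MeasurableSpace Ω] (P : Measure Ω) [IsProbabilityMeasure P]
    {ι κ : Type*} [Fintype ι] [Fintype κ]
    (egi egj : Ω → ℝ) (a : ι → Ω → ℝ) (b : κ → Ω → ℝ)
    (hL1 : MemLp egi 2 P) (hL2 : MemLp egj 2 P)
    (hLa : ∀ i, MemLp (a i) 2 P) (hLb : ∀ j, MemLp (b j) 2 P)
    (hza : ∀ i, ∫ ω, a i ω ∂P = 0) (hzb : ∀ j, ∫ ω, b j ω ∂P = 0)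
    (hind1 : IndepFun (fun ω => (egi ω, egj ω))
      (fun ω => ((fun i => a i ω), (fun j => b j ω))) P)
    (hind2 : IndepFun (fun ω (i : ι) => a i ω) (fun ω (j : κ) => b j ω) P) :
    ∫ ω, (egi ω - (∑ i, a i ω) / (Fintype.card ι : ℝ)) *
        (egj ω - (∑ j, b j ω) / (Fintype.card κ : ℝ)) ∂P
      = ∫ ω, egi ω * egj ω ∂P := by
  have hia i : Integrable (a i) P := (hLa i).integrable one_le_two
  have hib j : Integrable (b j) P := (hLb j).integrable one_le_two
  refine integral_sub_mul_sub_eq_of_indepFun (hL1.integrable one_le_two)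
    (hL2.integrable one_le_two) ((integrable_finsetSum _ fun i _ => hia i).div_const _)
    ((integrable_finsetSum _ fun j _ => hib j).div_const _) (hL1.integrable_mul hL2)
    ?_ ?_ ?_ (integral_sum_div_eq_zero hia hza _) (integral_sum_div_eq_zero hib hzb _)
  · exact hind1.comp measurable_fst ((measurable_sum_div _).comp measurable_snd)
  · exact (hind1.comp measurable_snd ((measurable_sum_div _).comp measurable_fst)).symm
  · exact hind2.comp (measurable_sum_div _) (measurable_sum_div _)

/-- Exact unbiasedness of the CNN pseudo-residual product: when the two sets of mean-zero
neighbors come from companion clusters independent of each other and of cluster `g`, the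
product of the two centered pseudo-residuals has expectation equal to the within-cluster
covariance, with no bias-correction factor. -/
theorem stmt_5 {Ω : Type*} [MeasurableSpace Ω] (P : Measure Ω) [IsProbabilityMeasure P]
    {ι κ : Type*} [Fintype ι] [Fintype κ] [Nonempty ι] [Nonempty κ]
    (egi egj : Ω → ℝ) (a : ι → Ω → ℝ) (b : κ → Ω → ℝ)
    (hm1 : Measurable egi) (hm2 : Measurable egj)
    (hma : ∀ i, Measurable (a i)) (hmb : ∀ j, Measurable (b j))
    (hL1 : MemLp egi 2 P) (hL2 : MemLp egj 2 P)
    (hLa : ∀ i, MemLp (a i) 2 P) (hLb : ∀ j, MemLp (b j) 2 P)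
    (hza : ∀ i, ∫ ω, a i ω ∂P = 0) (hzb : ∀ j, ∫ ω, b j ω ∂P = 0)
    (hind1 : IndepFun (fun ω => (egi ω, egj ω))
      (fun ω => ((fun i => a i ω), (fun j => b j ω))) P)
    (hind2 : IndepFun (fun ω (i : ι) => a i ω) (fun ω (j : κ) => b j ω) P) :
    ∫ ω, (egi ω - (∑ i, a i ω) / (Fintype.card ι : ℝ)) *
        (egj ω - (∑ j, b j ω) / (Fintype.card κ : ℝ)) ∂P
      = ∫ ω, egi ω * egj ω ∂P :=
  stmt_5_general P egi egj a b hL1 hL2 hLa hLb hza hzb hind1 hind2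
end

section
/- Fix positive integers $J$ and $R$ with $4J \le R$, and set $L = \lfloor R/(4J) \rfloor$. Suppose that for each cluster $g \in [G]$, two finite sets of 'support points' $S_g^-$ and $S_g^+$ are given with $|S_g^-| \le L$ and $|S_g^+| \le L$, and that for each $\star \in \{-,+\}$ and each support point $x \in S_g^{\star}$, the neighbor-selection rule picks the $J$ closest values among $\bigcup_{\tilde g \ne g} S_{\tilde g}^{\star}$ (Step 1), and then in Step 2 picks the $J$ closest values among clusters not already chosen, with companion sets $\mathcal{R}^1_g$ and $\mathcal{R}^2_g$ defined as the unions of clusters contributing selected values. If, for every cluster $g$ and every $\star$, each element of $S_g^{\star}$ can serve as one of the $J$ nearest values for at most $2J$ support points from other clusters in each step, then every cluster $g$ satisfies $\#\{\tilde g \in [G] : g \in \mathcal{R}^1_{\tilde g} \cup \mathcal{R}^2_{\tilde g}\} \le 4LJ \le R$. -/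
open Finset

/-- Lemma A.1: with support-dimension reduction to at most `L = ⌊R/(4J)⌋` support points
per side, and each support point of cluster `g` serving as a selected neighbor value for
at most `2J` other clusters, cluster `g` is used as a companion cluster at most
`4LJ ≤ R` times. -/
theorem stmt_6 (G J R L : ℕ) (hJ : 0 < J) (hR : 4 * J ≤ R) (hL : L = R / (4 * J))
    (S : Fin G → Bool → Finset ℝ) (hS : ∀ g b, (S g b).card ≤ L)
    (R1 R2 : Fin G → Finset (Fin G)) (g : Fin G)
    (used : Bool → ℝ → Finset (Fin G))
    (hused : ∀ b, ∀ y ∈ S g b, (used b y).card ≤ 2 * J)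
    (hmem : ∀ g' : Fin G, g ∈ R1 g' ∪ R2 g' → ∃ b, ∃ y ∈ S g b, g' ∈ used b y) :
    (Finset.univ.filter (fun g' : Fin G => g ∈ R1 g' ∪ R2 g')).card ≤ 4 * L * J ∧
      4 * L * J ≤ R := by
  have hRbound : 4 * L * J ≤ R := by
    have := Nat.div_mul_le_self R (4 * J)
    calc 4 * L * J = L * (4 * J) := by ring
      _ = R / (4 * J) * (4 * J) := by rw [hL]
      _ ≤ R := this
  refine ⟨?_, hRbound⟩
  have hsub : (Finset.univ.filter (fun g' : Fin G => g ∈ R1 g' ∪ R2 g')) ⊆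
      (Finset.univ : Finset Bool).biUnion (fun b => (S g b).biUnion (fun y => used b y)) := by
    intro g' hg'
    simp only [mem_filter] at hg'
    obtain ⟨b, y, hy, hgy⟩ := hmem g' hg'.2
    simp only [mem_biUnion]
    exact ⟨b, mem_univ b, y, hy, hgy⟩
  calc (Finset.univ.filter (fun g' : Fin G => g ∈ R1 g' ∪ R2 g')).card
      ≤ ((Finset.univ : Finset Bool).biUnion
          (fun b => (S g b).biUnion (fun y => used b y))).card := card_le_card hsub
    _ ≤ ∑ b : Bool, ((S g b).biUnion (fun y => used b y)).card := card_biUnion_le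
    _ ≤ ∑ b : Bool, ∑ y ∈ S g b, (used b y).card := by
        exact Finset.sum_le_sum fun b _ => card_biUnion_le
    _ ≤ ∑ b : Bool, ∑ _y ∈ S g b, 2 * J := by
        exact Finset.sum_le_sum fun b _ => Finset.sum_le_sum fun y hy => hused b y hy
    _ = ∑ b : Bool, (S g b).card * (2 * J) := by simp [Finset.sum_const, mul_comm]
    _ ≤ ∑ _b : Bool, L * (2 * J) := Finset.sum_le_sum fun b _ =>
        Nat.mul_le_mul_right _ (hS g b)
    _ = 4 * L * J := by simp [Fintype.card_bool]; ring
end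

section
/- Let $(\varepsilon_{gi})$ be random variables grouped in clusters $g \in [G]$ with index sets $I_g$, independent across clusters, with uniformly bounded conditional fourth moments: $\mathbb{E}[\varepsilon_{gi}^4] \le C_4$ for all $g, i$. Let $(w_{gi})$ be deterministic weights. Define $T = \sum_{g \in [G]} \sum_{i,j \in I_g} w_{gi} w_{gj} (\varepsilon_{gi}\varepsilon_{gj} - \mathbb{E}[\varepsilon_{gi}\varepsilon_{gj}])$. Then $\mathbb{E}[T] = 0$ and $\operatorname{Var}(T) \le C \cdot \Big(\max_{g \in [G]} \sum_{i,j \in I_g} |w_{gi} w_{gj}|\Big) \cdot \Big(\sum_{g \in [G]} \sum_{i,j \in I_g} |w_{gi} w_{gj}|\Big)$ for a constant $C$ depending only on $C_4$. -/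
open MeasureTheory ProbabilityTheory Finset

/-! Across clusters the summands of `T` are independent, so `Var T` is the sum of the cluster
variances. Inside a cluster, `2 |x y| ≤ x ^ 2 + y ^ 2` bounds `E[ε_i ^ 2 ε_j ^ 2]`, hence the
variance of each product `ε_i ε_j`, by `C4`; the same inequality applied to the centred products
bounds all their covariances by `C4`. So a cluster contributes at most `C4 (∑ |w_i w_j|) ^ 2`,
and one factor `∑ |w_i w_j|` is bounded by its maximum over the clusters. -/

section Moments

variable {Ω : Type*} [MeasurableSpace Ω] {μ : Measure Ω} {X Y : Ω → ℝ} {C : ℝ}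

lemma abs_integral_mul_le_of_integral_sq_le (hX : MemLp X 2 μ) (hY : MemLp Y 2 μ)
    (hXC : ∫ ω, X ω ^ 2 ∂μ ≤ C) (hYC : ∫ ω, Y ω ^ 2 ∂μ ≤ C) :
    |∫ ω, X ω * Y ω ∂μ| ≤ C := by
  have hsum : Integrable (fun ω => (X ω ^ 2 + Y ω ^ 2) / 2) μ :=
    (hX.integrable_sq.add hY.integrable_sq).div_const 2
  have hamgm : ∀ ω, |X ω * Y ω| ≤ (X ω ^ 2 + Y ω ^ 2) / 2 := fun ω => by
    rw [abs_mul]; nlinarith [sq_nonneg (|X ω| - |Y ω|), sq_abs (X ω), sq_abs (Y ω)]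
  calc |∫ ω, X ω * Y ω ∂μ| ≤ ∫ ω, |X ω * Y ω| ∂μ := abs_integral_le_integral_abs
    _ ≤ ∫ ω, (X ω ^ 2 + Y ω ^ 2) / 2 ∂μ :=
        integral_mono_of_nonneg (.of_forall fun _ => abs_nonneg _) hsum (.of_forall hamgm)
    _ = ((∫ ω, X ω ^ 2 ∂μ) + ∫ ω, Y ω ^ 2 ∂μ) / 2 := by
        rw [integral_div, integral_add hX.integrable_sq hY.integrable_sq]
    _ ≤ C := by linarith

lemma abs_covariance_le_of_variance_le [IsFiniteMeasure μ] (hX : MemLp X 2 μ) (hY : MemLp Y 2 μ)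
    (hXC : Var[X; μ] ≤ C) (hYC : Var[Y; μ] ≤ C) : |cov[X, Y; μ]| ≤ C := by
  rw [variance_eq_integral hX.aemeasurable] at hXC
  rw [variance_eq_integral hY.aemeasurable] at hYC
  exact abs_integral_mul_le_of_integral_sq_le (hX.sub (memLp_const _)) (hY.sub (memLp_const _))
    hXC hYC

lemma memLp_two_sq_of_integrable_pow_four (hX : AEStronglyMeasurable X μ)
    (hX4 : Integrable (fun ω => X ω ^ 4) μ) : MemLp (fun ω => X ω ^ 2) 2 μ := by
  refine (memLp_two_iff_integrable_sq (f := fun ω => X ω ^ 2) (hX.pow 2)).2 ?_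
  simpa only [← pow_mul] using hX4

lemma memLp_two_mul_of_integrable_pow_four (hX : AEStronglyMeasurable X μ)
    (hY : AEStronglyMeasurable Y μ) (hX4 : Integrable (fun ω => X ω ^ 4) μ)
    (hY4 : Integrable (fun ω => Y ω ^ 4) μ) : MemLp (fun ω => X ω * Y ω) 2 μ := by
  refine (memLp_two_iff_integrable_sq (f := fun ω => X ω * Y ω) (hX.mul hY)).2 ?_
  simp only [mul_pow]
  exact (memLp_two_sq_of_integrable_pow_four hX hX4).integrable_mul
    (memLp_two_sq_of_integrable_pow_four hY hY4)

lemma variance_mul_le_of_integral_pow_four_le [IsProbabilityMeasure μ]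
    (hX : AEStronglyMeasurable X μ) (hY : AEStronglyMeasurable Y μ)
    (hX4 : Integrable (fun ω => X ω ^ 4) μ) (hY4 : Integrable (fun ω => Y ω ^ 4) μ)
    (hXC : ∫ ω, X ω ^ 4 ∂μ ≤ C) (hYC : ∫ ω, Y ω ^ 4 ∂μ ≤ C) :
    Var[fun ω => X ω * Y ω; μ] ≤ C := by
  have hsq : ∀ Z : Ω → ℝ, ∫ ω, (Z ω ^ 2) ^ 2 ∂μ = ∫ ω, Z ω ^ 4 ∂μ := fun Z => by
    simp only [← pow_mul]
  calc Var[fun ω => X ω * Y ω; μ] ≤ ∫ ω, (X ω * Y ω) ^ 2 ∂μ :=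
        variance_le_expectation_sq (hX.mul hY)
    _ ≤ |∫ ω, X ω ^ 2 * Y ω ^ 2 ∂μ| := by simp only [mul_pow]; exact le_abs_self _
    _ ≤ C := abs_integral_mul_le_of_integral_sq_le (memLp_two_sq_of_integrable_pow_four hX hX4)
        (memLp_two_sq_of_integrable_pow_four hY hY4) (by rwa [hsq]) (by rwa [hsq])

lemma variance_sum_mul_le [IsFiniteMeasure μ] {ι : Type*} [Fintype ι] {Z : ι → Ω → ℝ}
    (hZ : ∀ i, MemLp (Z i) 2 μ) {K : ℝ} (hK : ∀ i j, |cov[Z i, Z j; μ]| ≤ K) (c : ι → ℝ) :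
    Var[fun ω => ∑ i, c i * Z i ω; μ] ≤ K * (∑ i, |c i|) ^ 2 := by
  have hcZ : ∀ i, MemLp (fun ω => c i * Z i ω) 2 μ := fun i => (hZ i).const_mul (c i)
  rw [← covariance_self (memLp_finsetSum _ fun i _ => hcZ i).aemeasurable,
    covariance_fun_sum_fun_sum hcZ hcZ, sq, sum_mul_sum, mul_sum]
  refine sum_le_sum fun i _ => ?_
  rw [mul_sum]
  refine sum_le_sum fun j _ => ?_
  rw [covariance_const_mul_left, covariance_const_mul_right]
  calc c i * (c j * cov[Z i, Z j; μ]) ≤ |c i| * (|c j| * |cov[Z i, Z j; μ]|) := by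
        simp only [← abs_mul]; exact le_abs_self _
    _ ≤ |c i| * (|c j| * K) := by gcongr; exact hK i j
    _ = K * (|c i| * |c j|) := by ring

end Moments

section QuadraticForm

variable {Ω ι : Type*} [MeasurableSpace Ω] {μ : Measure Ω} [Fintype ι] {ε : ι → Ω → ℝ}

noncomputable def centeredQuadraticForm (μ : Measure Ω) (ε : ι → Ω → ℝ) (w : ι → ℝ) : Ω → ℝ :=
  fun ω => ∑ i, ∑ j, w i * w j * (ε i ω * ε j ω - ∫ ω', ε i ω' * ε j ω' ∂μ)

variable [IsProbabilityMeasure μ] (hε : ∀ i, AEStronglyMeasurable (ε i) μ)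
  (hε4 : ∀ i, Integrable (fun ω => ε i ω ^ 4) μ)
include hε hε4

lemma memLp_two_centeredQuadraticForm (w : ι → ℝ) : MemLp (centeredQuadraticForm μ ε w) 2 μ :=
  memLp_finsetSum _ fun i _ => memLp_finsetSum _ fun j _ =>
    ((memLp_two_mul_of_integrable_pow_four (hε i) (hε j) (hε4 i) (hε4 j)).sub
      (memLp_const _)).const_mul _

lemma integral_centeredQuadraticForm (w : ι → ℝ) : ∫ ω, centeredQuadraticForm μ ε w ω ∂μ = 0 := by
  have hint : ∀ i j, Integrable (fun ω => ε i ω * ε j ω) μ := fun i j =>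
    (memLp_two_mul_of_integrable_pow_four (hε i) (hε j) (hε4 i) (hε4 j)).integrable one_le_two
  have hterm : ∀ i j, Integrable
      (fun ω => w i * w j * (ε i ω * ε j ω - ∫ ω', ε i ω' * ε j ω' ∂μ)) μ := fun i j =>
    ((hint i j).sub (integrable_const _)).const_mul _
  unfold centeredQuadraticForm
  rw [integral_finsetSum _ fun i _ => integrable_finsetSum _ fun j _ => hterm i j]
  refine sum_eq_zero fun i _ => ?_
  rw [integral_finsetSum _ fun j _ => hterm i j]
  refine sum_eq_zero fun j _ => ?_
  rw [integral_const_mul, integral_sub (hint i j) (integrable_const _)]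
  simp

lemma variance_centeredQuadraticForm_le {C : ℝ} (hC : ∀ i, ∫ ω, ε i ω ^ 4 ∂μ ≤ C) (w : ι → ℝ) :
    Var[centeredQuadraticForm μ ε w; μ] ≤ C * (∑ i, ∑ j, |w i * w j|) ^ 2 := by
  set Z : ι × ι → Ω → ℝ := fun p ω => ε p.1 ω * ε p.2 ω - ∫ ω', ε p.1 ω' * ε p.2 ω' ∂μ
  have hZ : ∀ p, MemLp (Z p) 2 μ := fun p =>
    (memLp_two_mul_of_integrable_pow_four (hε _) (hε _) (hε4 _) (hε4 _)).sub (memLp_const _)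
  have hvar : ∀ p, Var[Z p; μ] ≤ C := fun p => by
    rw [variance_sub_const (X := fun ω => ε p.1 ω * ε p.2 ω) ((hε _).mul (hε _))]
    exact variance_mul_le_of_integral_pow_four_le (hε _) (hε _) (hε4 _) (hε4 _) (hC _) (hC _)
  have := variance_sum_mul_le hZ
    (fun p q => abs_covariance_le_of_variance_le (hZ p) (hZ q) (hvar p) (hvar q))
    (fun p => w p.1 * w p.2)
  unfold centeredQuadraticForm
  simpa only [Fintype.sum_prod_type, Z] using this

end QuadraticForm

/-- Variance bound for the centered quadratic form of clustered residuals (step (C.2)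
of the proof of Theorem 3): `T` has mean zero and variance bounded by a constant
depending only on the fourth-moment bound times the product of the maximal
within-cluster absolute weight sum and the total absolute weight sum. -/
theorem stmt_14 {Ω : Type*} [MeasurableSpace Ω] (P : Measure Ω) [IsProbabilityMeasure P]
    (G : ℕ) (hG : 0 < G) {I : Fin G → Type*} [∀ g, Fintype (I g)]
    (ε : (g : Fin G) → I g → Ω → ℝ)
    (hmeas : ∀ g i, Measurable (ε g i))
    (hind : iIndepFun (m := fun g => (inferInstance : MeasurableSpace (I g → ℝ)))
      (fun g ω i => ε g i ω) P)
    (C4 : ℝ)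
    (hint4 : ∀ g i, Integrable (fun ω => ε g i ω ^ 4) P)
    (h4 : ∀ g i, ∫ ω, ε g i ω ^ 4 ∂P ≤ C4)
    (w : (g : Fin G) → I g → ℝ) (T : Ω → ℝ)
    (hT : ∀ ω, T ω = ∑ g, ∑ i, ∑ j, w g i * w g j *
      (ε g i ω * ε g j ω - ∫ ω', ε g i ω' * ε g j ω' ∂P)) :
    ∫ ω, T ω ∂P = 0 ∧
      variance T P ≤
        C4 * (Finset.univ.sup' ⟨⟨0, hG⟩, Finset.mem_univ _⟩
            (fun g => ∑ i, ∑ j, |w g i * w g j|)) *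
          (∑ g, ∑ i, ∑ j, |w g i * w g j|) := by
  set S : Fin G → Ω → ℝ := fun g => centeredQuadraticForm P (ε g) (w g)
  set A : Fin G → ℝ := fun g => ∑ i, ∑ j, |w g i * w g j|
  have hTS : T = ∑ g, S g := funext fun ω => by rw [hT ω, Finset.sum_apply]; rfl
  have hS2 : ∀ g, MemLp (S g) 2 P := fun g =>
    memLp_two_centeredQuadraticForm (fun i => (hmeas g i).aestronglyMeasurable) (hint4 g) (w g)
  have hSindep : Set.Pairwise (univ : Finset (Fin G)) fun g h => IndepFun (S g) (S h) P :=
    fun g _ h _ hgh => (hind.comp (fun g (v : I g → ℝ) => ∑ i, ∑ j, w g i * w g j *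
      (v i * v j - ∫ ω', ε g i ω' * ε g j ω' ∂P)) fun g => by fun_prop).indepFun hgh
  have hcluster : ∀ g, C4 * A g ^ 2 ≤ C4 * univ.sup' ⟨⟨0, hG⟩, mem_univ _⟩ A * A g := fun g => by
    -- `C4 ≥ 0` is only known once the cluster has a member
    rcases isEmpty_or_nonempty (I g) with _ | ⟨⟨i⟩⟩
    · simp [A]
    · have hC4 : 0 ≤ C4 := (integral_nonneg fun ω => by positivity).trans (h4 g i)
      have hA : 0 ≤ A g := by positivity
      have hAM : A g ≤ univ.sup' ⟨⟨0, hG⟩, mem_univ _⟩ A := le_sup' A (mem_univ g)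
      calc C4 * A g ^ 2 = C4 * A g * A g := by ring
        _ ≤ _ := by gcongr
  refine ⟨?_, ?_⟩
  · rw [hTS]
    simp only [Finset.sum_apply]
    rw [integral_finsetSum _ fun g _ => (hS2 g).integrable one_le_two]
    exact sum_eq_zero fun g _ => integral_centeredQuadraticForm
      (fun i => (hmeas g i).aestronglyMeasurable) (hint4 g) (w g)
  · rw [hTS, IndepFun.variance_sum (fun g _ => hS2 g) hSindep, mul_sum]
    exact sum_le_sum fun g _ => (variance_centeredQuadraticForm_le
      (fun i => (hmeas g i).aestronglyMeasurable) (hint4 g) (h4 g) (w g)).trans (hcluster g)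
end
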